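/- arXiv:2308.10725 — 2 statements merged into one kernel-verified Lean document; each statement's English description precedes it below -/
import Mathlib

section
/- For every natural number n ≥ 1, the inclusion matrix M(n) has rank 3n² − 3n + 1 over ℚ (equivalently, its rank equals n³ − (n−1)³). -/
/-- The two coordinates of a triple other than coordinate `c`, taken in order. -/
def omitCoord (n : ℕ) (c : Fin 3) (x : Fin n × Fin n × Fin n) : Fin n × Fin n :=
  if c = 0 then (x.2.1, x.2.2) else if c = 1 then (x.1, x.2.2) else (x.1, x.2.1)

/-- The inclusion matrix `M(n)`: rows are indexed by a coordinate `c ∈ {1,2,3}` to omit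
together with a pair `(u,v) ∈ (Fin n)²`, columns by triples `(x₁,x₂,x₃) ∈ (Fin n)³`;
the entry is `1` iff the two coordinates of the triple other than coordinate `c`,
taken in order, equal `(u,v)`. -/
def inclusionMatrix (n : ℕ) :
    Matrix (Fin 3 × Fin n × Fin n) (Fin n × Fin n × Fin n) ℚ :=
  fun r x => if omitCoord n r.1 x = r.2 then 1 else 0

lemma sum_ite_const {n : ℕ} {P : Prop} [Decidable P] (h : Fin n → ℚ) :
    ∑ c, (if P then h c else 0) = if P then ∑ c, h c else 0 := by
  split <;> simp

lemma row_sum0 {n : ℕ} (g : Fin n × Fin n × Fin n → ℚ) (u v : Fin n) :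
    ∑ x : Fin n × Fin n × Fin n, (if (x.2.1, x.2.2) = (u, v) then (1:ℚ) else 0) * g x
      = ∑ a, g (a, u, v) := by
  simp only [Fintype.sum_prod_type, Prod.ext_iff, ite_and, boole_mul, ite_mul, zero_mul,
    one_mul, Finset.sum_ite_eq, Finset.sum_ite_eq', Finset.mem_univ, if_true]
  simp [sum_ite_const, Finset.sum_ite_eq']

lemma row_sum1 {n : ℕ} (g : Fin n × Fin n × Fin n → ℚ) (u v : Fin n) :
    ∑ x : Fin n × Fin n × Fin n, (if (x.1, x.2.2) = (u, v) then (1:ℚ) else 0) * g x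
      = ∑ b, g (u, b, v) := by
  simp only [Fintype.sum_prod_type, Prod.ext_iff, ite_and, boole_mul, ite_mul, zero_mul,
    one_mul, Finset.sum_ite_eq, Finset.sum_ite_eq', Finset.mem_univ, if_true]
  simp [sum_ite_const, Finset.sum_ite_eq']

lemma row_sum2 {n : ℕ} (g : Fin n × Fin n × Fin n → ℚ) (u v : Fin n) :
    ∑ x : Fin n × Fin n × Fin n, (if (x.1, x.2.1) = (u, v) then (1:ℚ) else 0) * g x
      = ∑ c, g (u, v, c) := by
  simp only [Fintype.sum_prod_type, Prod.ext_iff, ite_and, boole_mul, ite_mul, zero_mul,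
    one_mul, Finset.sum_ite_eq, Finset.sum_ite_eq', Finset.mem_univ, if_true]
  simp only [sum_ite_const, Finset.sum_ite_eq', Finset.mem_univ, if_true]
  rw [Finset.sum_comm]
  simp [Finset.sum_ite_eq']

lemma mem_ker_iff (n : ℕ) (f : (Fin n × Fin n × Fin n) → ℚ) :
    f ∈ LinearMap.ker (inclusionMatrix n).mulVecLin ↔
      (∀ u v, ∑ x, f (x, u, v) = 0) ∧ (∀ u v, ∑ y, f (u, y, v) = 0) ∧
        (∀ u v, ∑ z, f (u, v, z) = 0) := by
  simp only [LinearMap.mem_ker, Matrix.mulVecLin_apply, funext_iff, Matrix.mulVec,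
    dotProduct, inclusionMatrix, Pi.zero_apply, Prod.forall]
  constructor
  · intro h
    refine ⟨fun u v => ?_, fun u v => ?_, fun u v => ?_⟩
    · have h' : ∑ x : Fin n × Fin n × Fin n,
          (if (x.2.1, x.2.2) = (u, v) then (1:ℚ) else 0) * f x = 0 := h 0 u v
      rwa [row_sum0] at h'
    · have h' : ∑ x : Fin n × Fin n × Fin n,
          (if (x.1, x.2.2) = (u, v) then (1:ℚ) else 0) * f x = 0 := h 1 u v
      rwa [row_sum1] at h'
    · have h' : ∑ x : Fin n × Fin n × Fin n,
          (if (x.1, x.2.1) = (u, v) then (1:ℚ) else 0) * f x = 0 := h 2 u v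
      rwa [row_sum2] at h'
  · rintro ⟨h1, h2, h3⟩ c u v
    fin_cases c
    · show ∑ x : Fin n × Fin n × Fin n,
          (if (x.2.1, x.2.2) = (u, v) then (1:ℚ) else 0) * f x = 0
      rw [row_sum0]; exact h1 u v
    · show ∑ x : Fin n × Fin n × Fin n,
          (if (x.1, x.2.2) = (u, v) then (1:ℚ) else 0) * f x = 0
      rw [row_sum1]; exact h2 u v
    · show ∑ x : Fin n × Fin n × Fin n,
          (if (x.1, x.2.1) = (u, v) then (1:ℚ) else 0) * f x = 0
      rw [row_sum2]; exact h3 u v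

def extFun (m : ℕ) (g : Fin m → ℚ) : Fin (m + 1) → ℚ :=
  fun i => if h : (i : ℕ) < m then g ⟨i, h⟩ else -∑ j, g j

lemma extFun_castSucc (m : ℕ) (g : Fin m → ℚ) (i : Fin m) :
    extFun m g i.castSucc = g i := by
  simp [extFun, i.isLt]

lemma extFun_sum (m : ℕ) (g : Fin m → ℚ) : ∑ i, extFun m g i = 0 := by
  rw [Fin.sum_univ_castSucc]
  simp [extFun]

lemma extFun_zero (m : ℕ) (i : Fin (m + 1)) : extFun m (fun _ => 0) i = 0 := by
  simp [extFun]

lemma sum_extFun {α : Type*} [Fintype α] (m : ℕ) (F : α → Fin m → ℚ) (i : Fin (m + 1)) :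
    ∑ a, extFun m (F a) i = extFun m (fun j => ∑ a, F a j) i := by
  unfold extFun
  split
  · rfl
  · rw [Finset.sum_comm]
    simp

def ext3 (m : ℕ) (g : Fin m × Fin m × Fin m → ℚ) :
    Fin (m + 1) × Fin (m + 1) × Fin (m + 1) → ℚ :=
  fun x => extFun m
    (fun a => extFun m (fun b => extFun m (fun c => g (a, b, c)) x.2.2) x.2.1) x.1

lemma ext3_castSucc (m : ℕ) (g : Fin m × Fin m × Fin m → ℚ) (a b c : Fin m) :
    ext3 m g (a.castSucc, b.castSucc, c.castSucc) = g (a, b, c) := by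
  simp [ext3, extFun_castSucc]

lemma ext3_sum1 (m : ℕ) (g : Fin m × Fin m × Fin m → ℚ) (y z : Fin (m + 1)) :
    ∑ x, ext3 m g (x, y, z) = 0 := by
  exact extFun_sum m (fun a => extFun m (fun b => extFun m (fun c => g (a, b, c)) z) y)

lemma ext3_sum2 (m : ℕ) (g : Fin m × Fin m × Fin m → ℚ) (x z : Fin (m + 1)) :
    ∑ y, ext3 m g (x, y, z) = 0 := by
  unfold ext3
  simp only
  rw [sum_extFun]
  rw [show (fun j => ∑ a, extFun m (fun b => extFun m (fun c => g (j, b, c)) z) a)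
      = fun _ => (0:ℚ) from funext fun j => extFun_sum m _]
  exact extFun_zero m x

lemma ext3_sum3 (m : ℕ) (g : Fin m × Fin m × Fin m → ℚ) (x y : Fin (m + 1)) :
    ∑ z, ext3 m g (x, y, z) = 0 := by
  unfold ext3
  simp only
  rw [sum_extFun]
  rw [show (fun a => ∑ z, extFun m (fun b => extFun m (fun c => g (a, b, c)) z) y)
      = fun _ => (0:ℚ) from funext fun a => by
        rw [sum_extFun,
          show (fun b => ∑ z, extFun m (fun c => g (a, b, c)) z) = fun _ => (0:ℚ)
            from funext fun b => extFun_sum m _]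
        exact extFun_zero m y]
  exact extFun_zero m x

theorem rank_inclusionMatrix (n : ℕ) (hn : 1 ≤ n) :
    (inclusionMatrix n).rank = 3 * n ^ 2 - 3 * n + 1 := by
  obtain ⟨m, rfl⟩ : ∃ m, n = m + 1 := ⟨n - 1, by omega⟩
  classical
  let restr : (LinearMap.ker (inclusionMatrix (m + 1)).mulVecLin) →ₗ[ℚ]
      ((Fin m × Fin m × Fin m) → ℚ) :=
    { toFun := fun f p => (f : _ → ℚ) (p.1.castSucc, p.2.1.castSucc, p.2.2.castSucc)
      map_add' := fun f g => rfl
      map_smul' := fun c f => rfl }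
  have hinj : Function.Injective restr := by
    rw [injective_iff_map_eq_zero]
    intro f hf
    obtain ⟨h1, h2, h3⟩ := (mem_ker_iff (m + 1) f.1).mp f.2
    have hres : ∀ a b c : Fin m, f.1 (a.castSucc, b.castSucc, c.castSucc) = 0 :=
      fun a b c => congrFun hf (a, b, c)
    have s1 : ∀ (x : Fin (m + 1)) (b c : Fin m), f.1 (x, b.castSucc, c.castSucc) = 0 := by
      intro x b c
      induction x using Fin.lastCases with
      | last =>
        have := h1 b.castSucc c.castSucc
        rw [Fin.sum_univ_castSucc] at this
        simpa [hres] using this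
      | cast a => exact hres a b c
    have s2 : ∀ (x y : Fin (m + 1)) (c : Fin m), f.1 (x, y, c.castSucc) = 0 := by
      intro x y c
      induction y using Fin.lastCases with
      | last =>
        have := h2 x c.castSucc
        rw [Fin.sum_univ_castSucc] at this
        simpa [s1] using this
      | cast b => exact s1 x b c
    have s3 : ∀ x y z, f.1 (x, y, z) = 0 := by
      intro x y z
      induction z using Fin.lastCases with
      | last =>
        have := h3 x y
        rw [Fin.sum_univ_castSucc] at this
        simpa [s2] using this
      | cast c => exact s2 x y c
    apply Subtype.ext
    funext p
    obtain ⟨x, y, z⟩ := p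
    simpa using s3 x y z
  have hsurj : Function.Surjective restr := by
    intro g
    refine ⟨⟨ext3 m g, ?_⟩, ?_⟩
    · rw [mem_ker_iff]
      exact ⟨fun u v => ext3_sum1 m g u v, fun u v => ext3_sum2 m g u v,
        fun u v => ext3_sum3 m g u v⟩
    · funext p
      exact ext3_castSucc m g p.1 p.2.1 p.2.2
  have hker : Module.finrank ℚ
      (LinearMap.ker (inclusionMatrix (m + 1)).mulVecLin) = m ^ 3 := by
    rw [(LinearEquiv.ofBijective restr ⟨hinj, hsurj⟩).finrank_eq,
      Module.finrank_fintype_fun_eq_card]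
    simp [pow_succ]
    ring
  have hrn := LinearMap.finrank_range_add_finrank_ker (inclusionMatrix (m + 1)).mulVecLin
  rw [hker, Module.finrank_fintype_fun_eq_card] at hrn
  have hcard : Fintype.card (Fin (m + 1) × Fin (m + 1) × Fin (m + 1))
      = m ^ 3 + (3 * m ^ 2 + 3 * m + 1) := by
    simp [Fintype.card_prod]
    ring
  rw [hcard] at hrn
  have key : (inclusionMatrix (m + 1)).rank = 3 * m ^ 2 + 3 * m + 1 := by
    rw [Matrix.rank]
    omega
  rw [key]
  have h2 : (m + 1) ^ 2 = m ^ 2 + 2 * m + 1 := by ring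
  rw [h2]
  generalize m ^ 2 = A
  omega
end

section
/- For every natural number n ≥ 1, the (n−1)³ intercalate vectors v_{ijk}, i,j,k ∈ {1,…,n−1}, form a basis (over ℚ) of the kernel of the inclusion matrix M(n). -/
/-- The intercalate vector `v_{ijk}`. -/
def intercalate (n : ℕ) [NeZero n] (i j k : Fin n) : (Fin n × Fin n × Fin n) → ℚ :=
  fun x =>
    (if x = ((0 : Fin n), (0 : Fin n), (0 : Fin n)) then 1 else 0)
    + (if x = ((0 : Fin n), j, k) then 1 else 0)
    + (if x = (i, (0 : Fin n), k) then 1 else 0)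
    + (if x = (i, j, (0 : Fin n)) then 1 else 0)
    - (if x = ((0 : Fin n), (0 : Fin n), k) then 1 else 0)
    - (if x = ((0 : Fin n), j, (0 : Fin n)) then 1 else 0)
    - (if x = (i, (0 : Fin n), (0 : Fin n)) then 1 else 0)
    - (if x = (i, j, k) then 1 else 0)


lemma row0 (n : ℕ) (g : Fin n × Fin n × Fin n → ℚ) (u v : Fin n) :
    (inclusionMatrix n).mulVecLin g (0, u, v) = ∑ t, g (t, u, v) := by
  simp [inclusionMatrix, Matrix.mulVecLin_apply, Matrix.mulVec, dotProduct, omitCoord,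
    Fintype.sum_prod_type, Prod.ext_iff, ite_and, boole_mul]

lemma row1 (n : ℕ) (g : Fin n × Fin n × Fin n → ℚ) (u v : Fin n) :
    (inclusionMatrix n).mulVecLin g (1, u, v) = ∑ t, g (u, t, v) := by
  simp [inclusionMatrix, Matrix.mulVecLin_apply, Matrix.mulVec, dotProduct, omitCoord,
    Fintype.sum_prod_type, Prod.ext_iff, ite_and, boole_mul]

lemma row2 (n : ℕ) (g : Fin n × Fin n × Fin n → ℚ) (u v : Fin n) :
    (inclusionMatrix n).mulVecLin g (2, u, v) = ∑ t, g (u, v, t) := by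
  simp only [inclusionMatrix, Matrix.mulVecLin_apply, Matrix.mulVec, dotProduct, omitCoord,
    Fintype.sum_prod_type, Prod.ext_iff, ite_and, boole_mul]
  rw [Finset.sum_comm]
  simp

/-- membership of intercalate in the kernel -/
lemma intercalate_mem_ker (n : ℕ) [NeZero n] (i j k : Fin n) :
    (inclusionMatrix n).mulVecLin (intercalate n i j k) = 0 := by
  funext r
  obtain ⟨c, u, v⟩ := r
  fin_cases c
  · erw [row0]
    simp [intercalate, Prod.ext_iff, ite_and, Finset.sum_add_distrib, Finset.sum_sub_distrib,
      Finset.sum_ite_eq, Finset.sum_ite_eq']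
    ring
  · erw [row1]
    simp [intercalate, Prod.ext_iff, ite_and, Finset.sum_add_distrib, Finset.sum_sub_distrib,
      Finset.sum_ite_eq, Finset.sum_ite_eq']
    ring
  · erw [row2]
    simp [intercalate, Prod.ext_iff, ite_and, Finset.sum_add_distrib, Finset.sum_sub_distrib,
      Finset.sum_ite_eq, Finset.sum_ite_eq']
    ring

/-- evaluation of intercalate at a triple with all coordinates nonzero -/
lemma intercalate_eval (n : ℕ) [NeZero n] (a b d i j k : Fin n)
    (hi : i ≠ 0) (hj : j ≠ 0) (hk : k ≠ 0) :
    intercalate n a b d (i, j, k) = -(if (a, b, d) = (i, j, k) then 1 else 0) := by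
  simp only [intercalate, Prod.mk.injEq]
  rw [if_neg (by tauto), if_neg (by tauto), if_neg (by tauto), if_neg (by tauto),
    if_neg (by tauto), if_neg (by tauto), if_neg (by tauto)]
  by_cases h : i = a ∧ j = b ∧ k = d
  · obtain ⟨h1, h2, h3⟩ := h; subst h1; subst h2; subst h3; simp
  · rw [if_neg (by tauto), if_neg (by tauto)]; ring

/-- a kernel element vanishing on all-nonzero triples is zero -/
lemma ker_vanish (n : ℕ) [NeZero n] (g : Fin n × Fin n × Fin n → ℚ)
    (hker : (inclusionMatrix n).mulVecLin g = 0)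
    (hvan : ∀ i j k : Fin n, i ≠ 0 → j ≠ 0 → k ≠ 0 → g (i, j, k) = 0) :
    g = 0 := by
  have h0 : ∀ u v, ∑ t, g (t, u, v) = 0 := fun u v => by
    rw [← row0 n g u v, hker]; rfl
  have h1 : ∀ u v, ∑ t, g (u, t, v) = 0 := fun u v => by
    rw [← row1 n g u v, hker]; rfl
  have h2 : ∀ u v, ∑ t, g (u, v, t) = 0 := fun u v => by
    rw [← row2 n g u v, hker]; rfl
  -- step 1: one-zero-coordinate triples
  have s1 : ∀ j k, j ≠ 0 → k ≠ 0 → g (0, j, k) = 0 := by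
    intro j k hj hk
    have := h0 j k
    rwa [Fintype.sum_eq_single (0 : Fin n) (fun t ht => hvan t j k ht hj hk)] at this
  have s2 : ∀ i k, i ≠ 0 → k ≠ 0 → g (i, 0, k) = 0 := by
    intro i k hi hk
    have := h1 i k
    rwa [Fintype.sum_eq_single (0 : Fin n) (fun t ht => hvan i t k hi ht hk)] at this
  have s3 : ∀ i j, i ≠ 0 → j ≠ 0 → g (i, j, 0) = 0 := by
    intro i j hi hj
    have := h2 i j
    rwa [Fintype.sum_eq_single (0 : Fin n) (fun t ht => hvan i j t hi hj ht)] at this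
  -- step 2: two-zero-coordinate triples
  have t1 : ∀ i, i ≠ 0 → g (i, 0, 0) = 0 := by
    intro i hi
    have := h1 i 0
    rwa [Fintype.sum_eq_single (0 : Fin n) (fun t ht => s3 i t hi ht)] at this
  have t2 : ∀ j, j ≠ 0 → g (0, j, 0) = 0 := by
    intro j hj
    have := h0 j 0
    rwa [Fintype.sum_eq_single (0 : Fin n) (fun t ht => s3 t j ht hj)] at this
  have t3 : ∀ k, k ≠ 0 → g (0, 0, k) = 0 := by
    intro k hk
    have := h0 0 k
    rwa [Fintype.sum_eq_single (0 : Fin n) (fun t ht => s2 t k ht hk)] at this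
  -- step 3: origin
  have t0 : g (0, 0, 0) = 0 := by
    have := h0 0 0
    rwa [Fintype.sum_eq_single (0 : Fin n) (fun t ht => t1 t ht)] at this
  funext x
  obtain ⟨i, j, k⟩ := x
  by_cases hi : i = 0 <;> by_cases hj : j = 0 <;> by_cases hk : k = 0 <;>
    simp_all [hvan, s1, s2, s3, t1, t2, t3, t0]

/-- evaluation of a linear combination at an all-nonzero triple -/
lemma sum_eval (n : ℕ) [NeZero n]
    (c : {i : Fin n // i ≠ 0} × {j : Fin n // j ≠ 0} × {k : Fin n // k ≠ 0} → ℚ)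
    (i j k : Fin n) (hi : i ≠ 0) (hj : j ≠ 0) (hk : k ≠ 0) :
    (∑ p, c p • intercalate n p.1.1 p.2.1.1 p.2.2.1) (i, j, k)
      = -c (⟨i, hi⟩, ⟨j, hj⟩, ⟨k, hk⟩) := by
  rw [Finset.sum_apply]
  have : ∀ p : {i : Fin n // i ≠ 0} × {j : Fin n // j ≠ 0} × {k : Fin n // k ≠ 0},
      (c p • intercalate n p.1.1 p.2.1.1 p.2.2.1) (i, j, k)
        = if p = (⟨i, hi⟩, ⟨j, hj⟩, ⟨k, hk⟩) then -c p else 0 := by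
    intro p
    obtain ⟨⟨a, ha⟩, ⟨b, hb⟩, ⟨d, hd⟩⟩ := p
    rw [Pi.smul_apply, intercalate_eval n a b d i j k hi hj hk]
    simp only [Prod.mk.injEq, Subtype.mk.injEq]
    by_cases h : a = i ∧ b = j ∧ d = k
    · obtain ⟨h1, h2, h3⟩ := h; subst h1; subst h2; subst h3; simp
    · rw [if_neg (by tauto), if_neg (by tauto)]; simp
  simp_rw [this]
  rw [Finset.sum_ite_eq' Finset.univ]
  simp


/-- The intercalate vectors `v_{ijk}`, `i,j,k ∈ {1,…,n-1}`, form a basis of the kernel of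
the inclusion matrix `M(n)`: they are linearly independent and span the kernel. -/
theorem intercalates_basis_of_ker (n : ℕ) [NeZero n] :
    LinearIndependent ℚ
      (fun p : {i : Fin n // i ≠ 0} × {j : Fin n // j ≠ 0} × {k : Fin n // k ≠ 0} =>
        intercalate n p.1.1 p.2.1.1 p.2.2.1) ∧
    Submodule.span ℚ
      (Set.range
        (fun p : {i : Fin n // i ≠ 0} × {j : Fin n // j ≠ 0} × {k : Fin n // k ≠ 0} =>
          intercalate n p.1.1 p.2.1.1 p.2.2.1)) =
      LinearMap.ker (inclusionMatrix n).mulVecLin := by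
  constructor
  · rw [Fintype.linearIndependent_iff]
    intro c hc p
    obtain ⟨⟨i, hi⟩, ⟨j, hj⟩, ⟨k, hk⟩⟩ := p
    have := congrFun hc (i, j, k)
    rw [Pi.zero_apply, sum_eval n c i j k hi hj hk] at this
    linarith
  · apply le_antisymm
    · rw [Submodule.span_le]
      rintro _ ⟨p, rfl⟩
      exact LinearMap.mem_ker.mpr (intercalate_mem_ker n p.1.1 p.2.1.1 p.2.2.1)
    · intro f hf
      rw [LinearMap.mem_ker] at hf
      set c : {i : Fin n // i ≠ 0} × {j : Fin n // j ≠ 0} × {k : Fin n // k ≠ 0} → ℚ :=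
        fun p => -f (p.1.1, p.2.1.1, p.2.2.1) with hcdef
      have key : f = ∑ p, c p • intercalate n p.1.1 p.2.1.1 p.2.2.1 := by
        have hg : f - ∑ p, c p • intercalate n p.1.1 p.2.1.1 p.2.2.1 = 0 := by
          apply ker_vanish n
          · rw [map_sub, hf, map_sum, zero_sub, neg_eq_zero]
            apply Finset.sum_eq_zero
            intro p _
            rw [map_smul, intercalate_mem_ker n p.1.1 p.2.1.1 p.2.2.1, smul_zero]
          · intro i j k hi hj hk
            rw [Pi.sub_apply, sum_eval n c i j k hi hj hk, hcdef]
            simp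
        have := sub_eq_zero.mp hg
        exact this
      rw [key]
      exact Submodule.sum_mem _ fun p _ =>
        Submodule.smul_mem _ _ (Submodule.subset_span ⟨p, rfl⟩)
end
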